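/- arXiv:math/0308289 — 5 statements merged into one kernel-verified Lean document; each statement's English description precedes it below -/
import Mathlib

section
/- Let C be a nonzero finite-dimensional coalgebra over ℂ that is simple, i.e. the only subcoalgebras of C are 0 and C itself. Then the set of cocommutative elements of C, namely {c ∈ C : τ(Δ(c)) = Δ(c)} where τ : C ⊗ C → C ⊗ C is the flip x ⊗ y ↦ y ⊗ x, is a one-dimensional ℂ-linear subspace of C. -/
/-!
The dual `C* = C →ₗ[ℂ] ℂ` is a finite-dimensional algebra under convolution, and the
coannihilator of a two-sided ideal of `C*` is a subcoalgebra of `C`; so `C*` is a simple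
algebra, hence a matrix algebra `Mₙ(ℂ)` by Wedderburn–Artin. An element `c` is cocommutative iff
`(fg)(c) = (gf)(c)` for all `f, g ∈ C*`, i.e. iff `c` is killed by the span of the commutators
of `C*`. In `Mₙ(ℂ)` that span is the kernel of the trace, of codimension one, so its
coannihilator in `C` is a line.
-/

open TensorProduct Module LinearMap

section Commutators

variable (R A : Type*) [CommRing R] [Ring A] [Algebra R A]

def commutatorSpan : Submodule R A :=
  Submodule.span R {x | ∃ a b : A, a * b - b * a = x}

variable {R A}

lemma map_commutatorSpan {B : Type*} [Ring B] [Algebra R B] (e : A ≃ₐ[R] B) :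
    (commutatorSpan R A).map e.toLinearMap = commutatorSpan R B := by
  rw [commutatorSpan, Submodule.map_span]
  congr 1
  ext x
  constructor
  · rintro ⟨_, ⟨a, b, rfl⟩, rfl⟩
    exact ⟨e a, e b, by simp⟩
  · rintro ⟨a, b, rfl⟩
    exact ⟨_, ⟨e.symm a, e.symm b, rfl⟩, by simp⟩

end Commutators

theorem Matrix.commutatorSpan_eq_ker_trace (n R : Type*) [Fintype n] [DecidableEq n]
    [CommRing R] :
    commutatorSpan R (Matrix n n R) = ker (Matrix.traceLinearMap n R R) := by
  apply le_antisymm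
  · rw [commutatorSpan, Submodule.span_le]
    rintro _ ⟨a, b, rfl⟩
    simp [Matrix.trace_mul_comm a b]
  intro M hM
  rcases isEmpty_or_nonempty n with hn | ⟨⟨i₀⟩⟩
  · simp [Subsingleton.elim M 0]
  -- every matrix unit is a commutator up to a multiple of the fixed diagonal unit at `i₀`
  have hcomm (i j : n) (c : R) :
      single i i₀ c * single i₀ j 1 - single i₀ j 1 * single i i₀ c =
        single i j c - if i = j then single i₀ i₀ c else 0 := by
    by_cases h : i = j
    · subst h
      simp
    · simp [h, Matrix.single_mul_single_of_ne _ _ _ _ (Ne.symm h)]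
  have hM' : M = ∑ i, ∑ j,
      (single i i₀ (M i j) * single i₀ j 1 - single i₀ j 1 * single i i₀ (M i j)) := by
    have htr : M.trace = 0 := hM
    simp only [hcomm, Finset.sum_sub_distrib, Finset.sum_ite_eq, Finset.mem_univ, if_true,
      ← Matrix.matrix_eq_sum_single]
    have hdiag : ∑ i, single i₀ i₀ (M i i) = single i₀ i₀ M.trace :=
      (map_sum (Matrix.singleAddMonoidHom (α := R) i₀ i₀) (fun i => M i i) _).symm
    rw [hdiag, htr, Matrix.single_zero, sub_zero]
  rw [hM']
  exact Submodule.sum_mem _ fun i _ => Submodule.sum_mem _ fun j _ =>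
    Submodule.subset_span ⟨_, _, rfl⟩

theorem Matrix.finrank_commutatorSpan_add_one (n K : Type*) [Fintype n] [DecidableEq n]
    [Nonempty n] [Field K] :
    finrank K (commutatorSpan K (Matrix n n K)) + 1 = Fintype.card n * Fintype.card n := by
  have hrange : range (Matrix.traceLinearMap n K K) = ⊤ :=
    range_eq_top.mpr Matrix.trace_surjective
  have hdim := (Matrix.traceLinearMap n K K).finrank_range_add_finrank_ker
  rw [hrange, finrank_top, finrank_self, Module.finrank_matrix, finrank_self, mul_one] at hdim
  rw [Matrix.commutatorSpan_eq_ker_trace]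
  omega

theorem IsSimpleRing.finrank_commutatorSpan_add_one (F A : Type*) [Field F] [IsAlgClosed F]
    [Ring A] [Algebra F A] [IsSimpleRing A] [FiniteDimensional F A] :
    finrank F (commutatorSpan F A) + 1 = finrank F A := by
  obtain ⟨n, hn, ⟨e⟩⟩ := IsSimpleRing.exists_algEquiv_matrix_of_isAlgClosed F A
  rw [← e.toLinearEquiv.finrank_map_eq, map_commutatorSpan e, e.toLinearEquiv.finrank_eq,
    Matrix.finrank_commutatorSpan_add_one, Module.finrank_matrix, finrank_self, mul_one]

theorem TensorProduct.ext_mul'_map {R M N : Type*} [CommRing R] [AddCommGroup M] [Module R M]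
    [AddCommGroup N] [Module R N] [Module.Free R M] [Module.Finite R M] [Module.Free R N]
    [Module.Finite R N] {t t' : M ⊗[R] N}
    (h : ∀ (f : Dual R M) (g : Dual R N), mul' R R (map f g t) = mul' R R (map f g t')) :
    t = t' := by
  rw [← sub_eq_zero, ← forall_dual_apply_eq_zero_iff R]
  intro φ
  obtain ⟨s, rfl⟩ := (dualDistribEquiv R M N).surjective φ
  induction s using TensorProduct.induction_on with
  | zero => simp
  | tmul f g =>
    have hpair (x : M ⊗[R] N) : dualDistribEquiv R M N (f ⊗ₜ g) x = mul' R R (map f g x) := by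
      induction x using TensorProduct.induction_on <;> simp_all
    rw [hpair, map_sub, map_sub, h, sub_self]
  | add s s' hs hs' => rw [map_add, LinearMap.add_apply, hs, hs', add_zero]

theorem TensorProduct.mem_range_map_subtype {K M N : Type*} [Field K] [AddCommGroup M]
    [Module K M] [AddCommGroup N] [Module K N] [FiniteDimensional K M] [FiniteDimensional K N]
    {D : Submodule K M} {E : Submodule K N} {t : M ⊗[K] N}
    (hD : ∀ f ∈ D.dualAnnihilator, ∀ g : Dual K N, mul' K K (map f g t) = 0)
    (hE : ∀ f : Dual K M, ∀ g ∈ E.dualAnnihilator, mul' K K (map f g t) = 0) :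
    t ∈ range (map D.subtype E.subtype) := by
  obtain ⟨D', hD'⟩ := D.exists_isCompl
  obtain ⟨E', hE'⟩ := E.exists_isCompl
  set p := D.projection D' hD'
  set q := E.projection E' hE'
  have hp (f : Dual K M) : f - f ∘ₗ p ∈ D.dualAnnihilator := by
    rw [Submodule.mem_dualAnnihilator]
    intro w hw
    simp [p, Submodule.projection_apply_of_mem_left hD' hw]
  have hq (g : Dual K N) : g - g ∘ₗ q ∈ E.dualAnnihilator := by
    rw [Submodule.mem_dualAnnihilator]
    intro w hw
    simp [q, Submodule.projection_apply_of_mem_left hE' hw]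
  refine ⟨map (D.projectionOnto D' hD') (E.projectionOnto E' hE') t, ?_⟩
  change (map D.subtype E.subtype ∘ₗ map _ _) t = t
  rw [← map_comp]
  refine (ext_mul'_map fun f g => ?_).symm
  calc mul' K K (map f g t)
        = mul' K K (map (f - f ∘ₗ p) g t) + mul' K K (map (f ∘ₗ p) g t) := by
        rw [← map_add, ← LinearMap.add_apply, ← map_add_left, sub_add_cancel]
    _ = mul' K K (map (f ∘ₗ p) (g - g ∘ₗ q) t) + mul' K K (map (f ∘ₗ p) (g ∘ₗ q) t) := by
        rw [hD _ (hp f), zero_add, ← map_add, ← LinearMap.add_apply, ← map_add_right,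
          sub_add_cancel]
    _ = mul' K K (map f g (map p q t)) := by
        rw [hE _ _ (hq g), zero_add, map_comp, comp_apply]

namespace WithConv

instance moduleFinite {R A : Type*} [Semiring R] [AddCommMonoid A] [Module R A]
    [Module.Finite R A] : Module.Finite R (WithConv A) :=
  Module.Finite.equiv (WithConv.linearEquiv R A).symm

lemma finrank_eq (R A : Type*) [Semiring R] [StrongRankCondition R] [AddCommGroup A]
    [Module R A] : finrank R (WithConv A) = finrank R A :=
  (WithConv.linearEquiv R A).finrank_eq

variable {K V : Type*} [Field K] [AddCommGroup V] [Module K V]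

def dualCoannihilator (S : Submodule K (WithConv (V →ₗ[K] K))) : Submodule K V :=
  (S.map (WithConv.linearEquiv K (V →ₗ[K] K)).toLinearMap).dualCoannihilator

lemma mem_dualCoannihilator {S : Submodule K (WithConv (V →ₗ[K] K))} {v : V} :
    v ∈ dualCoannihilator S ↔ ∀ φ ∈ S, φ v = 0 := by
  simp only [dualCoannihilator, Submodule.mem_dualCoannihilator, Submodule.mem_map]
  exact ⟨fun h φ hφ => h _ ⟨φ, hφ, rfl⟩, by rintro h _ ⟨φ, hφ, rfl⟩; exact h φ hφ⟩

lemma finrank_add_finrank_dualCoannihilator [FiniteDimensional K V]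
    (S : Submodule K (WithConv (V →ₗ[K] K))) :
    finrank K S + finrank K (dualCoannihilator S) = finrank K V := by
  rw [dualCoannihilator, ← (WithConv.linearEquiv K _).finrank_map_eq S]
  exact Subspace.finrank_add_finrank_dualCoannihilator_eq _

end WithConv

namespace Coalgebra

open WithConv

def IsSubcoalgebra {R C : Type*} [CommSemiring R] [AddCommMonoid C] [Module R C]
    [CoalgebraStruct R C] (D : Submodule R C) : Prop :=
  ∀ x ∈ D, comul x ∈ range (map D.subtype D.subtype)

lemma counit_ne_zero {R C : Type*} [CommSemiring R] [AddCommMonoid C] [Module R C]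
    [Coalgebra R C] [Nontrivial C] : (counit : C →ₗ[R] R) ≠ 0 := by
  intro h
  obtain ⟨c, hc⟩ := exists_ne (0 : C)
  have := congrArg (TensorProduct.lid R C) (rTensor_counit_comul (R := R) c)
  simp [h] at this
  exact hc this.symm

variable {K C : Type*} [Field K] [AddCommGroup C] [Module K C] [Coalgebra K C]
  [FiniteDimensional K C]

theorem comm_comul_eq_comul_iff (c : C) :
    TensorProduct.comm K C C (comul c) = comul c ↔
      ∀ f g : WithConv (C →ₗ[K] K), (f * g) c = (g * f) c := by
  have hflip (f g : WithConv (C →ₗ[K] K)) :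
      (g * f) c = mul' K K (map f.ofConv g.ofConv (TensorProduct.comm K C C (comul c))) := by
    rw [map_comm, mul'_comm]
    rfl
  constructor
  · intro h f g
    rw [hflip, h]
    rfl
  · intro h
    exact ext_mul'_map fun f g => (hflip (toConv f) (toConv g)).symm.trans (h _ _).symm

theorem ker_comm_comp_comul_sub_comul :
    ker ((TensorProduct.comm K C C).toLinearMap ∘ₗ comul - comul) =
      dualCoannihilator (commutatorSpan K (WithConv (C →ₗ[K] K))) := by
  ext c
  rw [mem_ker, LinearMap.sub_apply, comp_apply, sub_eq_zero, LinearEquiv.coe_coe,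
    comm_comul_eq_comul_iff, mem_dualCoannihilator]
  constructor
  · intro h φ hφ
    induction hφ using Submodule.span_induction with
    | mem _ hx =>
      obtain ⟨f, g, rfl⟩ := hx
      simp [h f g]
    | zero => rfl
    | add _ _ _ _ hx hy => simp [hx, hy]
    | smul _ _ _ hx => simp [hx]
  · intro h f g
    exact sub_eq_zero.mp (h _ (Submodule.subset_span ⟨f, g, rfl⟩))

theorem isSubcoalgebra_dualCoannihilator (I : TwoSidedIdeal (WithConv (C →ₗ[K] K))) :
    IsSubcoalgebra (dualCoannihilator (I.asIdeal.restrictScalars K)) := by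
  intro x hx
  have hann := Subspace.dualCoannihilator_dualAnnihilator_eq
    (W := (I.asIdeal.restrictScalars K).map (WithConv.linearEquiv K (C →ₗ[K] K)).toLinearMap)
  rw [← dualCoannihilator] at hann
  apply mem_range_map_subtype
  · intro f hf g
    rw [hann] at hf
    obtain ⟨φ, hφ, rfl⟩ := hf
    exact mem_dualCoannihilator.mp hx _ (I.mul_mem_right _ (toConv g) hφ)
  · intro f g hg
    rw [hann] at hg
    obtain ⟨φ, hφ, rfl⟩ := hg
    exact mem_dualCoannihilator.mp hx _ (I.mul_mem_left (toConv f) _ hφ)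

theorem isSimpleRing_withConv [Nontrivial C]
    (h : ∀ D : Submodule K C, IsSubcoalgebra D → D = ⊥ ∨ D = ⊤) :
    IsSimpleRing (WithConv (C →ₗ[K] K)) := by
  have : Nontrivial (WithConv (C →ₗ[K] K)) :=
    ⟨1, 0, fun h => counit_ne_zero (toConv_eq_zero.mp h)⟩
  refine .of_eq_bot_or_eq_top fun I => ?_
  have hdim := finrank_add_finrank_dualCoannihilator (I.asIdeal.restrictScalars K)
  rcases h _ (isSubcoalgebra_dualCoannihilator I) with hD | hD
  · right
    rw [hD, finrank_bot, add_zero, ← Subspace.dual_finrank_eq, ← WithConv.finrank_eq] at hdim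
    have h1 : (1 : WithConv (C →ₗ[K] K)) ∈ I.asIdeal.restrictScalars K :=
      Submodule.eq_top_of_finrank_eq hdim ▸ Submodule.mem_top
    exact I.one_mem_iff.mp h1
  · left
    rw [hD, finrank_top, Nat.add_eq_right, Submodule.finrank_eq_zero] at hdim
    ext x
    simpa using congrArg (x ∈ ·) hdim

end Coalgebra

/-- The cocommutative elements in a nonzero finite-dimensional simple
coalgebra over ℂ form a one-dimensional subspace. -/
theorem stmt_0 (C : Type*) [AddCommGroup C] [Module ℂ C] [FiniteDimensional ℂ C]
    [Nontrivial C] [Coalgebra ℂ C]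
    (hsimple : ∀ D : Submodule ℂ C,
      (∀ x ∈ D, Coalgebra.comul (R := ℂ) x ∈
        LinearMap.range (TensorProduct.map D.subtype D.subtype)) →
      D = ⊥ ∨ D = ⊤) :
    Module.finrank ℂ
      (LinearMap.ker
        ((TensorProduct.comm ℂ C C).toLinearMap ∘ₗ Coalgebra.comul
          - (Coalgebra.comul (R := ℂ) (A := C)))) = 1 := by
  have := Coalgebra.isSimpleRing_withConv hsimple
  have hdim := WithConv.finrank_add_finrank_dualCoannihilator
    (commutatorSpan ℂ (WithConv (C →ₗ[ℂ] ℂ)))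
  have hcomm := IsSimpleRing.finrank_commutatorSpan_add_one ℂ (WithConv (C →ₗ[ℂ] ℂ))
  rw [WithConv.finrank_eq, Subspace.dual_finrank_eq] at hcomm
  rw [Coalgebra.ker_comm_comp_comul_sub_comul]
  omega
end

section
/- Let U be a Hopf algebra over ℂ and T : U → End(V) a finite-dimensional irreducible representation (V ≠ 0 and the only T-invariant subspaces of V are 0 and V). Define the linear map c : V* ⊗ V → U* by c(ξ ⊗ v)(a) = ξ(T(a)v). Then: (i) c intertwines the representation T* ⊗ T on V* ⊗ V with the action ad° of U on U*, i.e. c((T* ⊗ T)(a)(w)) = ad°(a)(c(w)) for all a ∈ U and w ∈ V* ⊗ V; (ii) c is injective with image equal to the space of matrix elements M(T); in particular dim_ℂ M(T) = (dim_ℂ V)². -/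
open TensorProduct

section Defs

variable {U V : Type*} [Ring U] [HopfAlgebra ℂ U] [AddCommGroup V] [Module ℂ V]

/-- The right adjoint action `ad(a)b = Σ S(a₁) b a₂` of a Hopf algebra on itself. -/
noncomputable def adAct (a b : U) : U :=
  (LinearMap.mul' ℂ U ∘ₗ
    TensorProduct.map ((LinearMap.mulRight ℂ b) ∘ₗ HopfAlgebra.antipode (R := ℂ))
      LinearMap.id)
    (Coalgebra.comul a)

/-- The linear map `c : V* ⊗ V → U*`, `c(ξ ⊗ v)(a) = ξ(T(a)v)`. -/
noncomputable def cMap (T : U →ₐ[ℂ] Module.End ℂ V) :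
    (Module.Dual ℂ V) ⊗[ℂ] V →ₗ[ℂ] (U →ₗ[ℂ] ℂ) :=
  TensorProduct.lift
    ((LinearMap.lcomp ℂ (U →ₗ[ℂ] ℂ)
        ((T.toLinearMap : U →ₗ[ℂ] (V →ₗ[ℂ] V)).flip)) ∘ₗ
      (LinearMap.llcomp ℂ U V ℂ))

/-- The space of matrix elements `M(T)` of a representation `T : U → End(V)`:
the span of the functionals `c^ξ_v : a ↦ ξ(T(a)v)`. -/
noncomputable def matrixElems (T : U →ₐ[ℂ] Module.End ℂ V) :
    Submodule ℂ (U →ₗ[ℂ] ℂ) :=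
  Submodule.span ℂ
    {c | ∃ (ξ : Module.Dual ℂ V) (v : V), c = cMap T (ξ ⊗ₜ[ℂ] v)}

/-- The dual representation `T*`, `T*(a)ξ = ξ ∘ T(S(a))`, as a linear map
`U →ₗ End(V*)`. -/
noncomputable def dualRep (T : U →ₐ[ℂ] Module.End ℂ V) :
    U →ₗ[ℂ] (Module.Dual ℂ V →ₗ[ℂ] Module.Dual ℂ V) :=
  Module.Dual.transpose ∘ₗ (T.toLinearMap : U →ₗ[ℂ] (V →ₗ[ℂ] V)) ∘ₗ
    HopfAlgebra.antipode (R := ℂ)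

/-- The tensor product of two representations:
`(T₁ ⊗ T₂)(a) = Σ T₁(a₁) ⊗ T₂(a₂)`. -/
noncomputable def tensorRep {V₁ V₂ : Type*}
    [AddCommGroup V₁] [Module ℂ V₁] [AddCommGroup V₂] [Module ℂ V₂]
    (L₁ : U →ₗ[ℂ] (V₁ →ₗ[ℂ] V₁)) (L₂ : U →ₗ[ℂ] (V₂ →ₗ[ℂ] V₂)) :
    U →ₗ[ℂ] (V₁ ⊗[ℂ] V₂ →ₗ[ℂ] V₁ ⊗[ℂ] V₂) :=
  TensorProduct.homTensorHomMap (RingHom.id ℂ) V₁ V₂ V₁ V₂ ∘ₗ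
    TensorProduct.map L₁ L₂ ∘ₗ Coalgebra.comul

end Defs

/-
Irreducibility makes `V` a simple `U`-module whose `U`-endomorphisms are scalars (Schur, `ℂ` being
algebraically closed), so the Jacobson density theorem makes `T` surjective onto `End V`
(Burnside). Under `V* ⊗ V ≃ End V` one has `c(w)(a) = tr (T a ∘ w)`, and the trace form on `End V`
is nondegenerate, so `c` is injective. The intertwining property is a direct Sweedler computation.
-/

theorem LinearMap.eq_zero_of_forall_trace_mul_eq_zero {R M : Type*} [CommRing R] [AddCommGroup M]
    [Module R M] [Module.Free R M] [Module.Finite R M] {f : Module.End R M}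
    (h : ∀ g : Module.End R M, LinearMap.trace R M (g * f) = 0) : f = 0 := by
  ext u
  rw [LinearMap.zero_apply, ← Module.forall_dual_apply_eq_zero_iff R]
  intro ψ
  have hψ : ψ.smulRight u * f = (ψ ∘ₗ f).smulRight u := rfl
  simpa [hψ] using h (ψ.smulRight u)

theorem AlgHom.surjective_of_irreducible {k A V : Type*} [Field k] [IsAlgClosed k] [Ring A]
    [Algebra k A] [AddCommGroup V] [Module k V] [FiniteDimensional k V] [Nontrivial V]
    (T : A →ₐ[k] Module.End k V)
    (hirr : ∀ W : Submodule k V, (∀ a : A, ∀ w ∈ W, T a w ∈ W) → W = ⊥ ∨ W = ⊤) :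
    Function.Surjective T := by
  let _ : Module A V := Module.compHom V T.toRingHom
  have : IsScalarTower k A V := ⟨fun c a v => by
    change T (c • a) v = c • T a v
    simp⟩
  have : IsSimpleModule A V := by
    refine { eq_bot_or_eq_top := fun p => ?_ }
    simpa only [Submodule.restrictScalars_eq_bot_iff, Submodule.restrictScalars_eq_top_iff]
      using hirr (p.restrictScalars k) fun a w hw => p.smul_mem a hw
  classical
  intro f
  have hcomm (g : Module.End A V) (v : V) : f (g v) = g (f v) := by
    obtain ⟨c, rfl⟩ :=
      (IsSimpleModule.algebraMap_end_bijective_of_isAlgClosed k (A := A) (V := V)).2 g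
    simp
  let F : Module.End (Module.End A V) V := ⟨f.toAddMonoidHom, hcomm⟩
  let b := Module.finBasis k V
  obtain ⟨a, ha⟩ := jacobson_density F (Finset.univ.image b)
  exact ⟨a, b.ext fun i => (ha (b i) (by simp)).symm⟩

section MatrixElements

variable {U V : Type*} [Ring U] [HopfAlgebra ℂ U] [AddCommGroup V] [Module ℂ V]
  (T : U →ₐ[ℂ] Module.End ℂ V)

@[simp]
theorem cMap_tmul (ξ : Module.Dual ℂ V) (v : V) (a : U) : cMap T (ξ ⊗ₜ v) a = ξ (T a v) := rfl

theorem cMap_tensorRep_apply (a : U) (w : Module.Dual ℂ V ⊗[ℂ] V) (b : U) :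
    cMap T (tensorRep (dualRep T) (T.toLinearMap : U →ₗ[ℂ] (V →ₗ[ℂ] V)) a w) b =
      cMap T w (adAct a b) := by
  induction w using TensorProduct.induction_on with
  | zero => simp
  | add x y hx hy => simp only [map_add, LinearMap.add_apply, hx, hy]
  | tmul ξ v =>
    simp only [tensorRep, adAct, LinearMap.comp_apply]
    induction Coalgebra.comul (R := ℂ) a using TensorProduct.induction_on with
    | zero => simp
    | add x y hx hy => simp only [map_add, LinearMap.add_apply, hx, hy]
    | tmul a₁ a₂ => simp [dualRep, Module.Dual.transpose_apply, mul_assoc]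

theorem range_cMap : LinearMap.range (cMap T) = matrixElems T := by
  rw [← Submodule.map_top, ← TensorProduct.span_tmul_eq_top, Submodule.map_span, matrixElems]
  congr 1
  ext
  simp [eq_comm]

theorem cMap_apply_eq_trace [FiniteDimensional ℂ V] (w : Module.Dual ℂ V ⊗[ℂ] V) (a : U) :
    cMap T w a = LinearMap.trace ℂ V (T a * dualTensorHom ℂ V V w) := by
  induction w using TensorProduct.induction_on with
  | zero => simp
  | add x y hx hy => simp only [map_add, LinearMap.add_apply, mul_add, hx, hy]
  | tmul ξ v =>
    have : T a * dualTensorHom ℂ V V (ξ ⊗ₜ v) = ξ.smulRight (T a v) := by ext; simp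
    simp [this]

theorem cMap_injective [FiniteDimensional ℂ V] (hT : Function.Surjective T) :
    Function.Injective (cMap T) := by
  refine (injective_iff_map_eq_zero _).2 fun w hw =>
    (dualTensorHomEquiv ℂ V V).map_eq_zero_iff.1 ?_
  refine LinearMap.eq_zero_of_forall_trace_mul_eq_zero fun g => ?_
  obtain ⟨a, rfl⟩ := hT g
  change LinearMap.trace ℂ V (T a * dualTensorHom ℂ V V w) = 0
  rw [← cMap_apply_eq_trace, hw, LinearMap.zero_apply]

end MatrixElements

/-- For a finite-dimensional irreducible representation `T : U → End(V)` of a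
Hopf algebra `U` over ℂ, the map `c : V* ⊗ V → U*`, `c(ξ ⊗ v)(a) = ξ(T(a)v)`:
(i) intertwines `T* ⊗ T` with the action `ad°` of `U` on `U*`;
(ii) is injective with image the space of matrix elements `M(T)`;
in particular `dim M(T) = (dim V)²`. -/
theorem stmt_5 (U V : Type*) [Ring U] [HopfAlgebra ℂ U]
    [AddCommGroup V] [Module ℂ V] [FiniteDimensional ℂ V] [Nontrivial V]
    (T : U →ₐ[ℂ] Module.End ℂ V)
    (hirr : ∀ W : Submodule ℂ V, (∀ a : U, ∀ w ∈ W, T a w ∈ W) → W = ⊥ ∨ W = ⊤) :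
    (∀ (a : U) (w : (Module.Dual ℂ V) ⊗[ℂ] V) (b : U),
      cMap T ((tensorRep (dualRep T) (T.toLinearMap : U →ₗ[ℂ] (V →ₗ[ℂ] V)) a) w) b =
        cMap T w (adAct a b)) ∧
    Function.Injective (cMap T) ∧
    LinearMap.range (cMap T) = matrixElems T ∧
    Module.finrank ℂ (matrixElems T) = (Module.finrank ℂ V) ^ 2 := by
  have hinj := cMap_injective T (T.surjective_of_irreducible hirr)
  refine ⟨cMap_tensorRep_apply T, hinj, range_cMap T, ?_⟩
  rw [← range_cMap, LinearMap.finrank_range_of_inj hinj, Module.finrank_tensorProduct,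
    Subspace.dual_finrank_eq, sq]
end

section
/- Let B be an n×n matrix with entries in the Laurent polynomial ring ℤ[t, t⁻¹] such that B² = I. For q ∈ ℂ with q ≠ 0, let B_q be the complex n×n matrix obtained by evaluating every entry of B at t = q. Then the rank of B − I computed over the field ℚ(t) equals the rank of B_q − I computed over ℂ, and likewise the rank of B + I over ℚ(t) equals the rank of B_q + I over ℂ. Equivalently, the multiplicities of +1 and of −1 as eigenvalues of the involution B_q are independent of the choice of q ∈ ℂ \ {0}. -/
open LaurentPolynomial

instance myCharZeroRatFunc : CharZero (RatFunc ℚ) :=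
  charZero_of_injective_algebraMap (IsFractionRing.injective (Polynomial ℚ) (RatFunc ℚ))

lemma my_rank_smul {K : Type*} [Field K] {m n : ℕ} (c : K) (hc : c ≠ 0)
    (A : Matrix (Fin m) (Fin n) K) : (c • A).rank = A.rank := by
  have h : (c • A).mulVecLin = c • A.mulVecLin := by
    ext x i
    simp [Matrix.mulVecLin, Matrix.smul_mulVec]
  rw [Matrix.rank, h, LinearMap.range_smul _ _ hc, Matrix.rank]

lemma my_rank_neg {K : Type*} [Field K] {m n : ℕ}
    (A : Matrix (Fin m) (Fin n) K) : (-A).rank = A.rank := by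
  have h : -A = (-1 : K) • A := by rw [neg_one_smul]
  rw [h, my_rank_smul _ (by norm_num)]

/-- For an involution `M` over a char-zero field, `½(1 - M)` is an idempotent projection
whose trace equals its rank, hence `n - trace M = 2 * rank (M - 1)`. -/
lemma my_key {K : Type*} [Field K] [CharZero K] {n : ℕ}
    (M : Matrix (Fin n) (Fin n) K) (h : M * M = 1) :
    (n : K) - Matrix.trace M = 2 * (Matrix.rank (M - 1) : K) := by
  set P : Matrix (Fin n) (Fin n) K := (2⁻¹ : K) • (1 - M) with hP
  have h1 : (1 - M) * (1 - M) = (2 : K) • (1 - M) := by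
    have e1 : (1 - M) * (1 - M) = 1 - M - M + M * M := by noncomm_ring
    rw [e1, h, two_smul]
    abel
  have hPP : P * P = P := by
    rw [hP, smul_mul_smul_comm, h1, smul_smul]
    norm_num
  have hf : P.mulVecLin ∘ₗ P.mulVecLin = P.mulVecLin := by
    rw [← Matrix.mulVecLin_mul, hPP]
  have hproj : LinearMap.IsProj (LinearMap.range P.mulVecLin) P.mulVecLin := by
    constructor
    · intro x; exact LinearMap.mem_range_self _ x
    · rintro x ⟨y, rfl⟩
      show (P.mulVecLin ∘ₗ P.mulVecLin) y = _
      rw [hf]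
  have htr : LinearMap.trace K (Fin n → K) P.mulVecLin = (P.rank : K) := by
    rw [hproj.trace, Matrix.rank]
  have htr2 : LinearMap.trace K (Fin n → K) P.mulVecLin = Matrix.trace P := by
    rw [LinearMap.trace_eq_matrix_trace K (Pi.basisFun K (Fin n))]
    congr 1
    rw [LinearMap.toMatrix_eq_toMatrix', ← Matrix.toLin'_apply', LinearMap.toMatrix'_toLin']
  have hrk : P.rank = (M - 1).rank := by
    have h2 : P = (2⁻¹ : K) • -(M - 1) := by rw [hP, neg_sub]
    rw [h2, my_rank_smul _ (by norm_num), my_rank_neg]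
  have htrP : Matrix.trace P = 2⁻¹ * ((n : K) - Matrix.trace M) := by
    rw [hP, Matrix.trace_smul, Matrix.trace_sub, Matrix.trace_one, smul_eq_mul,
      Fintype.card_fin]
  have key := htr2.symm.trans htr
  rw [htrP, hrk] at key
  linear_combination 2 * key

/-- Let `B` be an `n × n` matrix over `ℤ[t, t⁻¹]` with `B² = I`.  For
`q ∈ ℂ`, `q ≠ 0`, the rank of `B - I` (resp. `B + I`) computed over `ℚ(t)` equals the
rank of `B_q - I` (resp. `B_q + I`) computed over ℂ, where `B_q` is obtained by
evaluating all entries at `t = q`.  Equivalently, the multiplicities of `+1` and `-1`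
as eigenvalues of the involution `B_q` do not depend on `q ∈ ℂ \ {0}`. -/
theorem stmt_8 (n : ℕ) (B : Matrix (Fin n) (Fin n) (LaurentPolynomial ℤ))
    (hB : B * B = 1)
    (q : ℂ) (hq : q ≠ 0)
    (e : LaurentPolynomial ℤ →+* ℂ) (he : e (LaurentPolynomial.T 1) = q)
    (ι : LaurentPolynomial ℤ →+* RatFunc ℚ) (hι : ι (LaurentPolynomial.T 1) = RatFunc.X)
    (hinj : Function.Injective ι) :
    Matrix.rank (B.map ι - 1) = Matrix.rank (B.map e - 1) ∧
    Matrix.rank (B.map ι + 1) = Matrix.rank (B.map e + 1) := by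
  have hι2 : (B.map ι) * (B.map ι) = 1 := by
    rw [← Matrix.map_mul, hB, Matrix.map_one _ (map_zero ι) (map_one ι)]
  have he2 : (B.map e) * (B.map e) = 1 := by
    rw [← Matrix.map_mul, hB, Matrix.map_one _ (map_zero e) (map_one e)]
  have htrι : Matrix.trace (B.map ι) = ι (Matrix.trace B) := by
    simp [Matrix.trace, Matrix.diag, map_sum]
  have htre : Matrix.trace (B.map e) = e (Matrix.trace B) := by
    simp [Matrix.trace, Matrix.diag, map_sum]
  set r1 := (B.map ι - 1).rank with hr1
  set s1 := (B.map e - 1).rank with hs1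
  set p1 := (B.map ι + 1).rank with hp1
  set p2 := (B.map e + 1).rank with hp2
  have k1 := my_key (B.map ι) hι2
  have k2 := my_key (B.map e) he2
  -- trace B is the integer n - 2 * r1
  have ha : Matrix.trace B = (((n : ℤ) - 2 * (r1 : ℤ) : ℤ) : LaurentPolynomial ℤ) := by
    apply hinj
    rw [map_intCast, ← htrι]
    push_cast
    linear_combination -k1
  have hia : ι (Matrix.trace B) = (n : RatFunc ℚ) - 2 * (r1 : RatFunc ℚ) := by
    rw [ha, map_intCast]; push_cast; ring
  have hea : e (Matrix.trace B) = (n : ℂ) - 2 * (r1 : ℂ) := by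
    rw [ha, map_intCast]; push_cast; ring
  have hsub : r1 = s1 := by
    have h2 : (2 : ℂ) * (r1 : ℂ) = 2 * (s1 : ℂ) := by
      rw [← k2, htre, hea]; ring
    exact_mod_cast mul_left_cancel₀ (by norm_num : (2:ℂ) ≠ 0) h2
  refine ⟨hsub, ?_⟩
  -- plus case: apply the key lemma to -B
  have hι3 : (-(B.map ι)) * (-(B.map ι)) = 1 := by rw [neg_mul_neg, hι2]
  have he3 : (-(B.map e)) * (-(B.map e)) = 1 := by rw [neg_mul_neg, he2]
  have k3 := my_key (-(B.map ι)) hι3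
  have k4 := my_key (-(B.map e)) he3
  have r3 : (-(B.map ι) - 1).rank = p1 := by
    have h3 : -(B.map ι) - 1 = -((B.map ι) + 1) := by abel
    rw [h3, my_rank_neg, hp1]
  have r4 : (-(B.map e) - 1).rank = p2 := by
    have h4 : -(B.map e) - 1 = -((B.map e) + 1) := by abel
    rw [h4, my_rank_neg, hp2]
  rw [Matrix.trace_neg, r3, htrι, hia] at k3
  rw [Matrix.trace_neg, r4, htre, hea] at k4
  have e1 : (p1 : RatFunc ℚ) + (r1 : RatFunc ℚ) = (n : RatFunc ℚ) := by
    linear_combination -k3 / 2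
  have e2 : (p2 : ℂ) + (r1 : ℂ) = (n : ℂ) := by
    linear_combination -k4 / 2
  have e1' : p1 + r1 = n := by exact_mod_cast e1
  have e2' : p2 + r1 = n := by exact_mod_cast e2
  omega
end

section
/- Let R be a commutative ℂ-algebra and let a_1, …, a_l ∈ R be algebraically independent over ℂ. Then in the polynomial ring R[z], the l + 1 elements a_1 z, …, a_l z, z² are algebraically independent over ℂ. -/
/-- If `a_1, …, a_l` are algebraically independent elements of a
commutative ℂ-algebra `R`, then `a_1 z, …, a_l z, z²` are algebraically independent
in the polynomial ring `R[z]`. -/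
theorem stmt_10 (R : Type*) [CommRing R] [Algebra ℂ R] (l : ℕ) (a : Fin l → R)
    (ha : AlgebraicIndependent ℂ a) :
    AlgebraicIndependent ℂ
      (Fin.snoc (fun i : Fin l => Polynomial.C (a i) * Polynomial.X)
        (Polynomial.X ^ 2) : Fin (l + 1) → Polynomial R) := by
  set f : Fin (l + 1) → Polynomial R :=
    (Fin.snoc (fun i : Fin l => Polynomial.C (a i) * Polynomial.X)
      (Polynomial.X ^ 2) : Fin (l + 1) → Polynomial R) with hf
  rw [algebraicIndependent_iff]
  intro P hP
  -- the weight of a monomial exponent: total degree of its image in R[z]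
  set w : (Fin (l + 1) →₀ ℕ) → ℕ :=
    fun d => (∑ i : Fin l, d i.castSucc) + 2 * d (Fin.last l) with hw
  -- product formula
  have hprod : ∀ d : Fin (l + 1) →₀ ℕ,
      (∏ i, f i ^ d i)
        = Polynomial.C (∏ i : Fin l, a i ^ d i.castSucc) * Polynomial.X ^ w d := by
    intro d
    rw [Fin.prod_univ_castSucc]
    simp only [hf, Fin.snoc_castSucc, Fin.snoc_last, ← pow_mul, hw]
    rw [pow_add, ← mul_assoc]
    congr 1
    calc ∏ i : Fin l, (Polynomial.C (a i) * Polynomial.X) ^ d i.castSucc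
        = ∏ i : Fin l, Polynomial.C (a i ^ d i.castSucc) * Polynomial.X ^ d i.castSucc := by
          refine Finset.prod_congr rfl fun i _ => ?_
          rw [mul_pow, Polynomial.C_pow]
      _ = _ := by
          rw [Finset.prod_mul_distrib, ← map_prod, Finset.prod_pow_eq_pow_sum]
  -- coefficient formula
  have hcoeff : ∀ n : ℕ, (MvPolynomial.aeval f P).coeff n
      = ∑ d ∈ P.support.filter (fun d => w d = n),
          algebraMap ℂ R (MvPolynomial.coeff d P) * ∏ i : Fin l, a i ^ d i.castSucc := by
    intro n
    rw [MvPolynomial.aeval_def, MvPolynomial.eval₂_eq', Polynomial.finset_sum_coeff,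
      Finset.sum_filter]
    refine Finset.sum_congr rfl fun d _ => ?_
    rw [hprod d, Polynomial.algebraMap_apply, ← mul_assoc, ← Polynomial.C_mul,
      Polynomial.coeff_C_mul, Polynomial.coeff_X_pow]
    by_cases h : w d = n
    · simp [h]
    · simp [h, Ne.symm h]
  -- restriction of exponents to the first `l` variables
  set r : (Fin (l + 1) →₀ ℕ) → (Fin l →₀ ℕ) :=
    fun d => Finsupp.equivFunOnFinite.symm (fun i => d i.castSucc) with hr
  -- every coefficient of P vanishes
  have key : ∀ d0 : Fin (l + 1) →₀ ℕ, MvPolynomial.coeff d0 P = 0 := by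
    intro d0
    by_cases hd0 : d0 ∈ P.support
    swap
    · simpa [MvPolynomial.mem_support_iff] using hd0
    set n := w d0 with hn
    set s := P.support.filter (fun d => w d = n) with hs
    have hd0s : d0 ∈ s := by
      rw [hs, Finset.mem_filter]; exact ⟨hd0, rfl⟩
    have hrinj : ∀ d ∈ s, ∀ d' ∈ s, r d = r d' → d = d' := by
      intro d hd d' hd' hrdd
      have hcs : ∀ i : Fin l, d i.castSucc = d' i.castSucc := by
        intro i
        have := congrArg (fun g => Finsupp.equivFunOnFinite g i) hrdd
        simpa [hr] using this
      have hwd : w d = n := (Finset.mem_filter.mp hd).2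
      have hwd' : w d' = n := (Finset.mem_filter.mp hd').2
      simp only [hw] at hwd hwd'
      have hsum : (∑ i : Fin l, d i.castSucc) = ∑ i : Fin l, d' i.castSucc :=
        Finset.sum_congr rfl fun i _ => hcs i
      have hlast : d (Fin.last l) = d' (Fin.last l) := by omega
      ext i
      refine Fin.lastCases ?_ ?_ i
      · exact hlast
      · exact hcs
    have haevalmono : ∀ d : Fin (l + 1) →₀ ℕ,
        MvPolynomial.aeval a (MvPolynomial.monomial (r d) (MvPolynomial.coeff d P))
          = algebraMap ℂ R (MvPolynomial.coeff d P) * ∏ i : Fin l, a i ^ d i.castSucc := by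
      intro d
      rw [MvPolynomial.aeval_monomial]
      congr 1
      rw [Finsupp.prod_fintype]
      · refine Finset.prod_congr rfl fun i _ => ?_
        simp [hr]
      · intro i; exact pow_zero _
    have hQ0 : MvPolynomial.aeval a
        (∑ d ∈ s, MvPolynomial.monomial (r d) (MvPolynomial.coeff d P)) = 0 := by
      have h1 := hcoeff n
      rw [hP, Polynomial.coeff_zero, ← hs] at h1
      rw [map_sum, Finset.sum_congr rfl fun d _ => haevalmono d, ← h1]
    have hQzero : (∑ d ∈ s, MvPolynomial.monomial (r d) (MvPolynomial.coeff d P))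
        = (0 : MvPolynomial (Fin l) ℂ) := algebraicIndependent_iff.mp ha _ hQ0
    have hc : MvPolynomial.coeff (r d0)
        (∑ d ∈ s, MvPolynomial.monomial (r d) (MvPolynomial.coeff d P))
          = MvPolynomial.coeff d0 P := by
      rw [MvPolynomial.coeff_sum]
      rw [Finset.sum_eq_single d0]
      · simp [MvPolynomial.coeff_monomial]
      · intro d hd hne
        rw [MvPolynomial.coeff_monomial, if_neg]
        intro h
        exact hne (hrinj d hd d0 hd0s h)
      · intro h
        exact absurd hd0s h
    rw [← hc, hQzero, MvPolynomial.coeff_zero]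
  exact MvPolynomial.ext _ _ fun d => by rw [key d, MvPolynomial.coeff_zero]
end

section
/- Let l ≥ 1 and let J be the 2l × 2l complex matrix that is block diagonal with l copies of the 2×2 block [[0,1],[1,0]]. Let A ∈ M(2l, ℂ) satisfy Aᵀ J A = J and det A = 1. Then the matrix J A − Aᵀ J is skew-symmetric, and det(J A − Aᵀ J) = (−1)^l · det(A + I) · det(A − I). -/
open Matrix

/-- The `2l × 2l` matrix which is block diagonal with `l` copies of `[[0,1],[1,0]]`,
realized on the index type `Fin l × Fin 2`: the block of index `i` occupies the rows and
columns `(i, 0), (i, 1)`. -/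
def Jmat (l : ℕ) : Matrix (Fin l × Fin 2) (Fin l × Fin 2) ℂ :=
  fun p q => if p.1 = q.1 ∧ p.2 ≠ q.2 then 1 else 0

lemma Jmat_transpose (l : ℕ) : (Jmat l)ᵀ = Jmat l := by
  ext p q
  simp only [transpose_apply, Jmat]
  congr 1
  exact propext ⟨fun ⟨h1, h2⟩ => ⟨h1.symm, h2.symm⟩, fun ⟨h1, h2⟩ => ⟨h1.symm, h2.symm⟩⟩

lemma Jmat_eq (l : ℕ) :
    Jmat l = (Matrix.blockDiagonal (fun _ : Fin l => !![0, 1; 1, 0] : Fin l → Matrix (Fin 2) (Fin 2) ℂ)).submatrix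
      (Equiv.prodComm (Fin l) (Fin 2)) (Equiv.prodComm (Fin l) (Fin 2)) := by
  ext ⟨i, a⟩ ⟨j, b⟩
  simp only [Jmat, submatrix_apply, Equiv.prodComm_apply, Prod.swap_prod_mk,
    blockDiagonal_apply]
  rcases eq_or_ne i j with h | h
  · subst h
    simp only [if_pos rfl, true_and]
    fin_cases a <;> fin_cases b <;> simp
  · simp [h, Ne.symm h]

lemma Jmat_det (l : ℕ) : (Jmat l).det = (-1 : ℂ) ^ l := by
  rw [Jmat_eq, Matrix.det_submatrix_equiv_self, Matrix.det_blockDiagonal]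
  simp [Matrix.det_fin_two_of]

/-- For `A ∈ SO(2l, ℂ)` in the realization `Aᵀ J A = J`, `det A = 1`,
the matrix `J A − Aᵀ J` is skew-symmetric and
`det(J A − Aᵀ J) = (−1)^l det(A + I) det(A − I)`. -/
theorem stmt_11 (l : ℕ) (hl : 1 ≤ l)
    (A : Matrix (Fin l × Fin 2) (Fin l × Fin 2) ℂ)
    (hA : Aᵀ * Jmat l * A = Jmat l) (hdet : A.det = 1) :
    (Jmat l * A - Aᵀ * Jmat l)ᵀ = -(Jmat l * A - Aᵀ * Jmat l) ∧
    (Jmat l * A - Aᵀ * Jmat l).det = (-1 : ℂ) ^ l * (A + 1).det * (A - 1).det := by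
  have hJ := Jmat_transpose l
  have hdetu : IsUnit A.det := by rw [hdet]; exact isUnit_one
  have hAinv : A * A⁻¹ = 1 := Matrix.mul_nonsing_inv A hdetu
  have hAinv' : A⁻¹ * A = 1 := Matrix.nonsing_inv_mul A hdetu
  constructor
  · rw [transpose_sub, transpose_mul, transpose_mul, transpose_transpose, hJ, neg_sub]
  · have h1 : Aᵀ * Jmat l = Jmat l * A⁻¹ := by
      calc Aᵀ * Jmat l = (Aᵀ * Jmat l * A) * A⁻¹ := by
            rw [Matrix.mul_assoc, hAinv, Matrix.mul_one]
        _ = Jmat l * A⁻¹ := by rw [hA]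
    have h2 : Jmat l * A - Aᵀ * Jmat l = Jmat l * (A - A⁻¹) := by
      rw [h1, Matrix.mul_sub]
    have hsq : (A + 1) * (A - 1) = A * A - 1 := by noncomm_ring
    have h3 : A - A⁻¹ = A⁻¹ * ((A + 1) * (A - 1)) := by
      rw [hsq, Matrix.mul_sub, Matrix.mul_one, ← Matrix.mul_assoc, hAinv', Matrix.one_mul]
    rw [h2, Matrix.det_mul, Jmat_det, h3, Matrix.det_mul, Matrix.det_mul,
      Matrix.det_nonsing_inv, hdet, Ring.inverse_one]
    ring
end
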